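/- For every even n and every equivalence class of Turyn-type sequences TT(n), there is exactly one member of the class which is in canonical form. -/

import Mathlib

/-- A sequence is modeled as a function `ℤ → ℤ`. -/
abbrev BSeq : Type := ℤ → ℤ

/-- A quadruple of sequences. -/
abbrev SeqQuad : Type := BSeq × BSeq × BSeq × BSeq

/-- A binary (`±1`) sequence of length `n`: supported on `[1, n]`,
with values in `{1, -1}` there, and `0` outside. -/
def IsBinarySeq (n : ℕ) (a : BSeq) : Prop :=
  (∀ i : ℤ, 1 ≤ i → i ≤ (n : ℤ) → a i = 1 ∨ a i = -1) ∧
  (∀ i : ℤ, i < 1 ∨ (n : ℤ) < i → a i = 0)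

/-- The nonperiodic autocorrelation function `N_A(i) = Σ_{j ∈ ℤ} a_j a_{i+j}`. -/
noncomputable def NAC (a : BSeq) (i : ℤ) : ℤ := ∑ᶠ j : ℤ, a j * a (i + j)

/-- `(A; B; C; D)` is a Turyn-type sequence `TT(n)`: binary sequences of lengths
`n, n, n, n-1` with `N_A(i) + N_B(i) + 2N_C(i) + 2N_D(i) = 0` for all `i ≠ 0`. -/
def IsTT (n : ℕ) (A B C D : BSeq) : Prop :=
  IsBinarySeq n A ∧ IsBinarySeq n B ∧ IsBinarySeq n C ∧ IsBinarySeq (n - 1) D ∧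
  ∀ i : ℤ, i ≠ 0 → NAC A i + NAC B i + 2 * NAC C i + 2 * NAC D i = 0

/-- The negated sequence `-A`. -/
def negSeq (a : BSeq) : BSeq := fun i => -a i

/-- The reversed sequence `A'` of a sequence of length `n`. -/
def revSeq (n : ℕ) (a : BSeq) : BSeq := fun i => a ((n : ℤ) + 1 - i)

/-- The alternated sequence `A*`, whose `i`-th entry is `(-1)^(i-1) a_i`. -/
def altSeq (a : BSeq) : BSeq := fun i => if Even i then -a i else a i

/-- The elementary transformations of a quadruple `(A; B; C; D)` (with `A, B, C`
of length `n` and `D` of length `n-1`). -/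
inductive ElemStep (n : ℕ) : SeqQuad → SeqQuad → Prop
  | negA (A B C D : BSeq) : ElemStep n (A, B, C, D) (negSeq A, B, C, D)
  | negB (A B C D : BSeq) : ElemStep n (A, B, C, D) (A, negSeq B, C, D)
  | negC (A B C D : BSeq) : ElemStep n (A, B, C, D) (A, B, negSeq C, D)
  | negD (A B C D : BSeq) : ElemStep n (A, B, C, D) (A, B, C, negSeq D)
  | revA (A B C D : BSeq) : ElemStep n (A, B, C, D) (revSeq n A, B, C, D)
  | revB (A B C D : BSeq) : ElemStep n (A, B, C, D) (A, revSeq n B, C, D)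
  | revC (A B C D : BSeq) : ElemStep n (A, B, C, D) (A, B, revSeq n C, D)
  | revD (A B C D : BSeq) : ElemStep n (A, B, C, D) (A, B, C, revSeq (n - 1) D)
  | alt (A B C D : BSeq) : ElemStep n (A, B, C, D) (altSeq A, altSeq B, altSeq C, altSeq D)
  | swap (A B C D : BSeq) : ElemStep n (A, B, C, D) (B, A, C, D)

/-- Two quadruples are equivalent if one can be transformed into the other by a
finite sequence of elementary transformations. -/
def TTEquiv (n : ℕ) : SeqQuad → SeqQuad → Prop := Relation.ReflTransGen (ElemStep n)

/-- The canonical form of a Turyn-type sequence `TT(n)`. -/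
def IsCanonical (n : ℕ) (A B C D : BSeq) : Prop :=
  -- (i)
  (A 1 = 1 ∧ A (n : ℤ) = 1 ∧ B 1 = 1 ∧ B (n : ℤ) = 1 ∧ C 1 = 1 ∧
    (2 ≤ n → D 1 = 1)) ∧
  -- (ii)
  (∀ i : ℤ, 1 ≤ i → i ≤ (n : ℤ) → A i ≠ A ((n : ℤ) + 1 - i) →
    (∀ j : ℤ, 1 ≤ j → j < i → A j = A ((n : ℤ) + 1 - j)) → A i = 1) ∧
  -- (iii)
  (∀ i : ℤ, 1 ≤ i → i ≤ (n : ℤ) → B i ≠ B ((n : ℤ) + 1 - i) →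
    (∀ j : ℤ, 1 ≤ j → j < i → B j = B ((n : ℤ) + 1 - j)) → B i = 1) ∧
  -- (iv)
  (∀ i : ℤ, 1 ≤ i → i ≤ (n : ℤ) → C i = C ((n : ℤ) + 1 - i) →
    (∀ j : ℤ, 1 ≤ j → j < i → C j ≠ C ((n : ℤ) + 1 - j)) → C i = 1) ∧
  -- (v)
  (∀ i : ℤ, 1 ≤ i → i ≤ (n : ℤ) - 1 → D i * D ((n : ℤ) - i) ≠ D ((n : ℤ) - 1) →
    (∀ j : ℤ, 1 ≤ j → j < i → D j * D ((n : ℤ) - j) = D ((n : ℤ) - 1)) → D i = 1) ∧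
  -- (vi)
  (2 < n → A 2 ≠ B 2 → A 2 = 1) ∧
  (2 < n → A 2 = B 2 → A ((n : ℤ) - 1) = 1 ∧ B ((n : ℤ) - 1) = -1)


/-!
Negation, reversal and alternation preserve the Turyn condition, since they change the
autocorrelations at most by the sign `(-1)^i`. Alternation commutes with negation, and with
reversal up to a sign, so every member of a class arises from a fixed one by possibly alternating
all four sequences and swapping `A` and `B`, and then negating and/or reversing each sequence.

Existence: for even `n` alternation flips `a₁aₙ`, so we may assume `a₁aₙ = 1`; the Turyn identity
at shift `n - 1` then forces `b₁bₙ = 1` and `c₁cₙ = -1`. Each of (ii)–(v) is reached by reversing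
(for `C`, and for `D` when `d_{n-1} = -1`, negating and reversing) one sequence, because at the
first index where the relevant symmetry fails this changes the sign of the entry. The identity at
shift `n - 2` shows that exactly one of `A`, `B` is asymmetric at index `2`, so (vi) holds after
possibly swapping them.

Uniqueness: alternation is ruled out by (i) since it flips `a₁aₙ`; the same first-index argument
shows that no nontrivial negation or reversal preserves (i)–(v); and a swap preserving (vi)
forces `A = B`.
-/

@[simp] lemma negSeq_negSeq (a : BSeq) : negSeq (negSeq a) = a := by
  funext i; simp [negSeq]

@[simp] lemma revSeq_revSeq (m : ℕ) (a : BSeq) : revSeq m (revSeq m a) = a := by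
  funext i; simp [revSeq]

@[simp] lemma altSeq_altSeq (a : BSeq) : altSeq (altSeq a) = a := by
  funext i; by_cases h : Even i <;> simp [altSeq, h]

lemma revSeq_negSeq (m : ℕ) (a : BSeq) : revSeq m (negSeq a) = negSeq (revSeq m a) := rfl

lemma altSeq_negSeq (a : BSeq) : altSeq (negSeq a) = negSeq (altSeq a) := by
  funext i; by_cases h : Even i <;> simp [altSeq, negSeq, h]

lemma altSeq_revSeq_of_even {m : ℕ} (hm : Even m) (a : BSeq) :
    altSeq (revSeq m a) = negSeq (revSeq m (altSeq a)) := by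
  funext i; by_cases h : Even i <;> simp [altSeq, revSeq, negSeq, h, hm, parity_simps]

lemma altSeq_revSeq_of_odd {m : ℕ} (hm : Odd m) (a : BSeq) :
    altSeq (revSeq m a) = revSeq m (altSeq a) := by
  funext i; by_cases h : Even i <;> simp [altSeq, revSeq, h, hm, parity_simps]

lemma altSeq_mul_altSeq (a : BSeq) (i j : ℤ) :
    altSeq a j * altSeq a (i + j) = if Even i then a j * a (i + j) else -(a j * a (i + j)) := by
  by_cases hi : Even i <;> by_cases hj : Even j <;> simp [altSeq, hi, hj, parity_simps]

namespace IsBinarySeq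

variable {m : ℕ} {a : BSeq}

lemma ext {b : BSeq} (ha : IsBinarySeq m a) (hb : IsBinarySeq m b)
    (h : ∀ i : ℤ, 1 ≤ i → i ≤ m → a i = b i) : a = b := by
  funext i
  by_cases hi : 1 ≤ i ∧ i ≤ m
  · exact h i hi.1 hi.2
  · rw [ha.2 i (by omega), hb.2 i (by omega)]

lemma mem_Icc_of_ne_zero (ha : IsBinarySeq m a) {i : ℤ} (hi : a i ≠ 0) : 1 ≤ i ∧ i ≤ m := by
  by_contra h
  exact hi (ha.2 i (by omega))

lemma negSeq (ha : IsBinarySeq m a) : IsBinarySeq m (negSeq a) :=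
  ⟨fun i h1 h2 => by rcases ha.1 i h1 h2 with h | h <;> simp [_root_.negSeq, h],
    fun i hi => by simp [_root_.negSeq, ha.2 i hi]⟩

lemma revSeq (ha : IsBinarySeq m a) : IsBinarySeq m (revSeq m a) :=
  ⟨fun i h1 h2 => ha.1 _ (by omega) (by omega), fun i hi => ha.2 _ (by omega)⟩

lemma altSeq (ha : IsBinarySeq m a) : IsBinarySeq m (altSeq a) :=
  ⟨fun i h1 h2 => by
    rcases ha.1 i h1 h2 with h | h <;> by_cases he : Even i <;> simp [_root_.altSeq, he, h],
    fun i hi => by simp [_root_.altSeq, ha.2 i hi]⟩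

lemma eq_neg_of_ne (ha : IsBinarySeq m a) {i j : ℤ} (hi : 1 ≤ i ∧ i ≤ m) (hj : 1 ≤ j ∧ j ≤ m)
    (h : a i ≠ a j) : a j = -a i := by
  have := ha.1 i hi.1 hi.2; have := ha.1 j hj.1 hj.2; omega

lemma mul_mem (ha : IsBinarySeq m a) {i j : ℤ} (hi : 1 ≤ i ∧ i ≤ m) (hj : 1 ≤ j ∧ j ≤ m) :
    a i * a j = 1 ∨ a i * a j = -1 := by
  rcases ha.1 i hi.1 hi.2 with h | h <;> rcases ha.1 j hj.1 hj.2 with h' | h' <;> simp [h, h']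

end IsBinarySeq

lemma NAC_negSeq (a : BSeq) (i : ℤ) : NAC (negSeq a) i = NAC a i := by
  simp [NAC, negSeq]

lemma NAC_revSeq (m : ℕ) (a : BSeq) (i : ℤ) : NAC (revSeq m a) i = NAC a i := by
  unfold NAC
  rw [← finsum_comp_equiv (Equiv.subLeft ((m : ℤ) + 1 - i))]
  refine finsum_congr fun j => ?_
  simp only [Equiv.subLeft_apply, revSeq]
  rw [mul_comm]; congr 2 <;> ring

lemma NAC_altSeq (a : BSeq) (i : ℤ) :
    NAC (altSeq a) i = if Even i then NAC a i else -NAC a i := by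
  simp only [NAC, altSeq_mul_altSeq]
  split_ifs
  · rfl
  · exact finsum_neg_distrib _

section NAC

variable {m : ℕ} {a : BSeq}

lemma NAC_eq_sum (ha : IsBinarySeq m a) (i : ℤ) (s : Finset ℤ)
    (hs : ∀ j, 1 ≤ j → i + j ≤ m → j ∈ s) : NAC a i = ∑ j ∈ s, a j * a (i + j) := by
  refine finsum_eq_sum_of_support_subset _ fun j hj => hs j ?_ ?_
  · exact (ha.mem_Icc_of_ne_zero (left_ne_zero_of_mul hj)).1
  · exact (ha.mem_Icc_of_ne_zero (right_ne_zero_of_mul hj)).2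

lemma NAC_eq_zero_of_le (ha : IsBinarySeq m a) {i : ℤ} (hi : (m : ℤ) ≤ i) : NAC a i = 0 := by
  rw [NAC_eq_sum ha i ∅ fun j hj hij => by omega, Finset.sum_empty]

lemma NAC_sub_one (ha : IsBinarySeq m a) : NAC a (m - 1) = a 1 * a m := by
  rw [NAC_eq_sum ha _ {1} fun j hj hij => by simp; omega, Finset.sum_singleton, sub_add_cancel]

lemma NAC_sub_two (ha : IsBinarySeq m a) :
    NAC a (m - 2) = a 1 * a (m - 1) + a 2 * a m := by
  rw [NAC_eq_sum ha _ {1, 2} fun j hj hij => by simp; omega, Finset.sum_pair (by norm_num)]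
  ring_nf

end NAC

section TT

variable {n : ℕ} {A B C D : BSeq}

lemma IsTT.of_elemStep {X Y : SeqQuad} (hs : ElemStep n X Y)
    (h : IsTT n X.1 X.2.1 X.2.2.1 X.2.2.2) : IsTT n Y.1 Y.2.1 Y.2.2.1 Y.2.2.2 := by
  obtain ⟨hA, hB, hC, hD, hN⟩ := h
  cases hs with
  | negA => exact ⟨hA.negSeq, hB, hC, hD, fun i hi => by simpa [NAC_negSeq] using hN i hi⟩
  | negB => exact ⟨hA, hB.negSeq, hC, hD, fun i hi => by simpa [NAC_negSeq] using hN i hi⟩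
  | negC => exact ⟨hA, hB, hC.negSeq, hD, fun i hi => by simpa [NAC_negSeq] using hN i hi⟩
  | negD => exact ⟨hA, hB, hC, hD.negSeq, fun i hi => by simpa [NAC_negSeq] using hN i hi⟩
  | revA => exact ⟨hA.revSeq, hB, hC, hD, fun i hi => by simpa [NAC_revSeq] using hN i hi⟩
  | revB => exact ⟨hA, hB.revSeq, hC, hD, fun i hi => by simpa [NAC_revSeq] using hN i hi⟩
  | revC => exact ⟨hA, hB, hC.revSeq, hD, fun i hi => by simpa [NAC_revSeq] using hN i hi⟩
  | revD => exact ⟨hA, hB, hC, hD.revSeq, fun i hi => by simpa [NAC_revSeq] using hN i hi⟩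
  | alt =>
    refine ⟨hA.altSeq, hB.altSeq, hC.altSeq, hD.altSeq, fun i hi => ?_⟩
    have := hN i hi
    simp only [NAC_altSeq]
    split_ifs <;> linarith
  | swap => exact ⟨hB, hA, hC, hD, fun i hi => by linarith [hN i hi]⟩

lemma IsTT.of_ttEquiv {X Y : SeqQuad} (hXY : TTEquiv n X Y)
    (h : IsTT n X.1 X.2.1 X.2.2.1 X.2.2.2) : IsTT n Y.1 Y.2.1 Y.2.2.1 Y.2.2.2 := by
  induction hXY with
  | refl => exact h
  | tail _ hs ih => exact ih.of_elemStep hs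

lemma ElemStep.symm {X Y : SeqQuad} (hs : ElemStep n X Y) : ElemStep n Y X := by
  cases hs with
  | negA A B C D => simpa using ElemStep.negA (n := n) (negSeq A) B C D
  | negB A B C D => simpa using ElemStep.negB (n := n) A (negSeq B) C D
  | negC A B C D => simpa using ElemStep.negC (n := n) A B (negSeq C) D
  | negD A B C D => simpa using ElemStep.negD (n := n) A B C (negSeq D)
  | revA A B C D => simpa using ElemStep.revA (n := n) (revSeq n A) B C D
  | revB A B C D => simpa using ElemStep.revB (n := n) A (revSeq n B) C D
  | revC A B C D => simpa using ElemStep.revC (n := n) A B (revSeq n C) D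
  | revD A B C D => simpa using ElemStep.revD (n := n) A B C (revSeq (n - 1) D)
  | alt A B C D => simpa using ElemStep.alt (n := n) (altSeq A) (altSeq B) (altSeq C) (altSeq D)
  | swap A B C D => exact ElemStep.swap B A C D

instance : Std.Symm (ElemStep n) := ⟨fun _ _ => ElemStep.symm⟩

lemma TTEquiv.symm {X Y : SeqQuad} (h : TTEquiv n X Y) : TTEquiv n Y X :=
  Std.Symm.symm (r := Relation.ReflTransGen (ElemStep n)) _ _ h

lemma IsTT.identity_at_sub_one (h : IsTT n A B C D) (hn : 2 ≤ n) :
    A 1 * A n + B 1 * B n + 2 * (C 1 * C n) = 0 := by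
  obtain ⟨hA, hB, hC, hD, hN⟩ := h
  have hDz : NAC D (n - 1) = 0 := NAC_eq_zero_of_le hD (by omega)
  have := hN (n - 1) (by omega)
  rwa [NAC_sub_one hA, NAC_sub_one hB, NAC_sub_one hC, hDz, mul_zero, add_zero] at this

lemma IsTT.identity_at_sub_two (h : IsTT n A B C D) (hn : 3 ≤ n) :
    (A 1 * A (n - 1) + A 2 * A n) + (B 1 * B (n - 1) + B 2 * B n) +
      2 * (C 1 * C (n - 1) + C 2 * C n) + 2 * (D 1 * D (n - 1)) = 0 := by
  obtain ⟨hA, hB, hC, hD, hN⟩ := h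
  have hD2 : NAC D (n - 2) = D 1 * D (n - 1) := by
    have hcast : ((n - 1 : ℕ) : ℤ) = n - 1 := by omega
    have := NAC_sub_one hD
    rwa [hcast, sub_sub, one_add_one_eq_two] at this
  have := hN (n - 2) (by omega)
  rwa [NAC_sub_two hA, NAC_sub_two hB, NAC_sub_two hC, hD2] at this

end TT

def PosAtFirst (N : ℤ) (P : ℤ → Prop) (s : BSeq) : Prop :=
  ∀ i, 1 ≤ i → i ≤ N → P i → (∀ j, 1 ≤ j → j < i → ¬ P j) → s i = 1

section PosAtFirst

variable {N : ℤ} {P : ℤ → Prop} {f g : BSeq}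

lemma exists_least_index (h : ∃ i, 1 ≤ i ∧ i ≤ N ∧ P i) :
    ∃ i, (1 ≤ i ∧ i ≤ N ∧ P i) ∧ ∀ j, 1 ≤ j → j < i → ¬ P j := by
  obtain ⟨i, hi, hmin⟩ := Int.exists_least_of_bdd (P := fun z => 1 ≤ z ∧ z ≤ N ∧ P z)
    ⟨1, fun z hz => hz.1⟩ h
  exact ⟨i, hi, fun j hj hji hP => by have := hmin j ⟨hj, by omega, hP⟩; omega⟩

lemma PosAtFirst.or_of_neg (hf : ∀ i, 1 ≤ i → i ≤ N → f i = 1 ∨ f i = -1)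
    (hfg : ∀ i, 1 ≤ i → i ≤ N → P i → g i = -f i) : PosAtFirst N P f ∨ PosAtFirst N P g := by
  by_cases hex : ∃ i, 1 ≤ i ∧ i ≤ N ∧ P i
  · obtain ⟨i₀, ⟨h1, hN, hP⟩, hmin⟩ := exists_least_index hex
    have hleast : ∀ i, 1 ≤ i → i ≤ N → P i → (∀ j, 1 ≤ j → j < i → ¬ P j) → i = i₀ :=
      fun i hi1 _ hiP himin => le_antisymm (not_lt.1 fun h => himin i₀ h1 h hP)
        (not_lt.1 fun h => hmin i hi1 h hiP)
    rcases hf i₀ h1 hN with h | h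
    · exact .inl fun i hi1 hiN hiP himin => hleast i hi1 hiN hiP himin ▸ h
    · refine .inr fun i hi1 hiN hiP himin => ?_
      rw [hleast i hi1 hiN hiP himin, hfg i₀ h1 hN hP, h, neg_neg]
  · exact .inl fun i hi1 hiN hiP _ => absurd ⟨i, hi1, hiN, hiP⟩ hex

lemma PosAtFirst.not_of_neg (hf : PosAtFirst N P f) (hg : PosAtFirst N P g)
    (hfg : ∀ i, 1 ≤ i → i ≤ N → P i → g i = -f i) : ∀ i, 1 ≤ i → i ≤ N → ¬ P i := by
  intro i hi1 hiN hiP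
  obtain ⟨i₀, ⟨h1, hN, hP⟩, hmin⟩ := exists_least_index ⟨i, hi1, hiN, hiP⟩
  have := hg i₀ h1 hN hP hmin
  rw [hfg i₀ h1 hN hP, hf i₀ h1 hN hP hmin] at this
  norm_num at this

end PosAtFirst

inductive SignRev (m : ℕ) (s : BSeq) : BSeq → Prop
  | refl : SignRev m s s
  | neg : SignRev m s (negSeq s)
  | rev : SignRev m s (revSeq m s)
  | negRev : SignRev m s (negSeq (revSeq m s))

namespace SignRev

variable {m : ℕ} {s t u : BSeq}

lemma negSeq (h : SignRev m s t) : SignRev m s (negSeq t) := by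
  cases h with
  | refl => exact neg
  | neg => simpa using refl
  | rev => exact negRev
  | negRev => simpa using rev

lemma revSeq (h : SignRev m s t) : SignRev m s (revSeq m t) := by
  cases h with
  | refl => exact rev
  | neg => exact negRev
  | rev => simpa using refl
  | negRev => simpa [revSeq_negSeq] using neg

lemma trans (h : SignRev m s t) (h' : SignRev m t u) : SignRev m s u := by
  cases h' with
  | refl => exact h
  | neg => exact h.negSeq
  | rev => exact h.revSeq
  | negRev => exact h.revSeq.negSeq

lemma altSeq (h : SignRev m s t) : SignRev m (altSeq s) (altSeq t) := by
  have hrev : SignRev m (_root_.altSeq s) (_root_.altSeq (_root_.revSeq m s)) := by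
    rcases Nat.even_or_odd m with hm | hm
    · rw [altSeq_revSeq_of_even hm]; exact negRev
    · rw [altSeq_revSeq_of_odd hm]; exact rev
  cases h with
  | refl => exact refl
  | neg => rw [altSeq_negSeq]; exact neg
  | rev => exact hrev
  | negRev => rw [altSeq_negSeq]; exact hrev.negSeq

lemma isBinarySeq (h : SignRev m s t) (hs : IsBinarySeq m s) : IsBinarySeq m t := by
  cases h
  exacts [hs, hs.negSeq, hs.revSeq, hs.revSeq.negSeq]

lemma mul_ends (h : SignRev m s t) : t 1 * t m = s 1 * s m := by
  cases h <;> simp [_root_.negSeq, _root_.revSeq, mul_comm]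

lemma exists_first_eq_one (hs : IsBinarySeq m s) (hm : 1 ≤ m) : ∃ t, SignRev m s t ∧ t 1 = 1 := by
  rcases hs.1 1 le_rfl (by omega) with h | h
  · exact ⟨s, refl, h⟩
  · exact ⟨_root_.negSeq s, neg, by simp [_root_.negSeq, h]⟩

end SignRev

def AsymAt (n : ℕ) (s : BSeq) (i : ℤ) : Prop := s i ≠ s (n + 1 - i)

def SymAt (n : ℕ) (s : BSeq) (i : ℤ) : Prop := s i = s (n + 1 - i)

def DefectAt (n : ℕ) (s : BSeq) (i : ℤ) : Prop := s i * s (n - i) ≠ s (n - 1)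

def IsNormalized (n : ℕ) (A B C D : BSeq) : Prop :=
  A 1 = 1 ∧ A n = 1 ∧ B 1 = 1 ∧ B n = 1 ∧ C 1 = 1 ∧ D 1 = 1 ∧
    PosAtFirst n (AsymAt n A) A ∧ PosAtFirst n (AsymAt n B) B ∧
    PosAtFirst n (SymAt n C) C ∧ PosAtFirst (n - 1) (DefectAt n D) D

def ABOrdered (n : ℕ) (A B : BSeq) : Prop :=
  (2 < n → A 2 ≠ B 2 → A 2 = 1) ∧
    (2 < n → A 2 = B 2 → A ((n : ℤ) - 1) = 1 ∧ B ((n : ℤ) - 1) = -1)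

lemma isCanonical_iff {n : ℕ} (hn : 2 ≤ n) {A B C D : BSeq} :
    IsCanonical n A B C D ↔ IsNormalized n A B C D ∧ ABOrdered n A B := by
  simp only [IsCanonical, IsNormalized, ABOrdered, PosAtFirst, AsymAt, SymAt, DefectAt, ne_eq,
    not_not, hn, forall_const]
  tauto

lemma IsNormalized.swap {n : ℕ} {A B C D : BSeq} (h : IsNormalized n A B C D) :
    IsNormalized n B A C D := by
  obtain ⟨hA1, hAn, hB1, hBn, hC1, hD1, hA, hB, hC, hD⟩ := h
  exact ⟨hB1, hBn, hA1, hAn, hC1, hD1, hB, hA, hC, hD⟩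

section Components

variable {n : ℕ} {s : BSeq}

lemma eq_neg_of_mul_ne {x y ε : ℤ} (hx : x = 1 ∨ x = -1) (hy : y = 1 ∨ y = -1)
    (hε : ε = 1 ∨ ε = -1) (h : x * y ≠ ε) : y = -(ε * x) := by
  rcases hx with rfl | rfl <;> rcases hy with rfl | rfl <;> rcases hε with rfl | rfl <;>
    simp_all

lemma eq_of_mul_eq {x y ε : ℤ} (hx : x = 1 ∨ x = -1) (h : x * y = ε) : y = ε * x := by
  rcases hx with rfl | rfl <;> linarith

lemma revSeq_sub_one_apply (hn : 1 ≤ n) (s : BSeq) (i : ℤ) : revSeq (n - 1) s i = s (n - i) := by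
  simp only [revSeq]; congr 1; omega

lemma asymAt_revSeq : AsymAt n (revSeq n s) = AsymAt n s := by
  funext i; simp [AsymAt, revSeq, ne_comm]

lemma symAt_negSeq_revSeq : SymAt n (negSeq (revSeq n s)) = SymAt n s := by
  funext i; simp [SymAt, negSeq, revSeq, eq_comm]

lemma defectAt_revSeq (hn : 1 ≤ n) (h1 : s 1 = 1) (hlast : s (n - 1) = 1) :
    DefectAt n (revSeq (n - 1) s) = DefectAt n s := by
  funext i; simp [DefectAt, revSeq_sub_one_apply hn, mul_comm, h1, hlast]

lemma defectAt_negSeq_revSeq (hn : 1 ≤ n) (h1 : s 1 = 1) (hlast : s (n - 1) = -1) :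
    DefectAt n (negSeq (revSeq (n - 1) s)) = DefectAt n s := by
  funext i; simp [DefectAt, negSeq, revSeq_sub_one_apply hn, mul_comm, h1, hlast]

lemma revSeq_eq_neg_of_asymAt (hs : IsBinarySeq n s) {i : ℤ} (h1 : 1 ≤ i)
    (h2 : i ≤ n) (h : AsymAt n s i) : revSeq n s i = -s i :=
  hs.eq_neg_of_ne ⟨h1, h2⟩ ⟨by omega, by omega⟩ h

lemma negSeq_revSeq_eq_neg_of_symAt {i : ℤ} (h : SymAt n s i) :
    negSeq (revSeq n s) i = -s i := by
  simp [negSeq, revSeq, h.symm]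

lemma IsBinarySeq.eq_of_defectAt (hs : IsBinarySeq (n - 1) s) {i : ℤ} (h1 : 1 ≤ i)
    (h2 : i ≤ n - 1) (h : DefectAt n s i) : s (n - i) = -(s (n - 1) * s i) :=
  eq_neg_of_mul_ne (hs.1 i h1 (by omega)) (hs.1 _ (by omega) (by omega))
    (hs.1 _ (by omega) (by omega)) h

lemma exists_signRev_asymAt (hs : IsBinarySeq n s) (hn : 1 ≤ n) (hends : s 1 * s n = 1) :
    ∃ t, SignRev n s t ∧ t 1 = 1 ∧ t n = 1 ∧ PosAtFirst n (AsymAt n t) t := by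
  obtain ⟨u, hsu, hu1⟩ := SignRev.exists_first_eq_one hs hn
  have hun : u n = 1 := by simpa [hu1, hends] using hsu.mul_ends
  have hu := hsu.isBinarySeq hs
  rcases PosAtFirst.or_of_neg (P := AsymAt n u) hu.1
    (fun i h1 h2 hi => revSeq_eq_neg_of_asymAt hu h1 h2 hi) with h | h
  · exact ⟨u, hsu, hu1, hun, h⟩
  · exact ⟨revSeq n u, hsu.revSeq, by simpa [revSeq] using hun, by simpa [revSeq] using hu1,
      by rwa [asymAt_revSeq]⟩

lemma exists_signRev_symAt (hs : IsBinarySeq n s) (hn : 1 ≤ n) (hends : s 1 * s n = -1) :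
    ∃ t, SignRev n s t ∧ t 1 = 1 ∧ PosAtFirst n (SymAt n t) t := by
  obtain ⟨u, hsu, hu1⟩ := SignRev.exists_first_eq_one hs hn
  have hun : u n = -1 := by simpa [hu1, hends] using hsu.mul_ends
  rcases PosAtFirst.or_of_neg (P := SymAt n u) (hsu.isBinarySeq hs).1
    (fun i _ _ hi => negSeq_revSeq_eq_neg_of_symAt hi) with h | h
  · exact ⟨u, hsu, hu1, h⟩
  · exact ⟨negSeq (revSeq n u), hsu.revSeq.negSeq, by simp [negSeq, revSeq, hun],
      by rwa [symAt_negSeq_revSeq]⟩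

lemma exists_signRev_defectAt (hs : IsBinarySeq (n - 1) s) (hn : 2 ≤ n) :
    ∃ t, SignRev (n - 1) s t ∧ t 1 = 1 ∧ PosAtFirst (n - 1) (DefectAt n t) t := by
  obtain ⟨u, hsu, hu1⟩ := SignRev.exists_first_eq_one hs (by omega)
  have hu := hsu.isBinarySeq hs
  have hbin : ∀ i : ℤ, 1 ≤ i → i ≤ n - 1 → u i = 1 ∨ u i = -1 := fun i h1 h2 =>
    hu.1 i h1 (by omega)
  have hrev := revSeq_sub_one_apply (by omega : 1 ≤ n) u
  rcases hbin (n - 1) (by omega) le_rfl with hlast | hlast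
  · rcases PosAtFirst.or_of_neg (P := DefectAt n u) (g := revSeq (n - 1) u) hbin
      (fun i h1 h2 hi => by simp [hrev, hu.eq_of_defectAt h1 h2 hi, hlast]) with h | h
    · exact ⟨u, hsu, hu1, h⟩
    · exact ⟨_, hsu.revSeq, by simp [hrev, hlast],
        by rwa [defectAt_revSeq (by omega) hu1 hlast]⟩
  · rcases PosAtFirst.or_of_neg (P := DefectAt n u) (g := negSeq (revSeq (n - 1) u)) hbin
      (fun i h1 h2 hi => by simp [negSeq, hrev, hu.eq_of_defectAt h1 h2 hi, hlast]) with h | h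
    · exact ⟨u, hsu, hu1, h⟩
    · exact ⟨_, hsu.revSeq.negSeq, by simp [negSeq, hrev, hlast],
        by rwa [defectAt_negSeq_revSeq (by omega) hu1 hlast]⟩

end Components

section Existence

variable {n : ℕ} {A B C D : BSeq}

lemma altSeq_mul_ends (hev : Even n) (a : BSeq) : altSeq a 1 * altSeq a n = -(a 1 * a n) := by
  simp [altSeq, (Int.even_coe_nat n).2 hev]

lemma IsTT.mul_ends (h : IsTT n A B C D) (hn : 2 ≤ n) (hA : A 1 * A n = 1) :
    B 1 * B n = 1 ∧ C 1 * C n = -1 := by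
  have := h.identity_at_sub_one hn
  have := h.2.1.mul_mem (i := 1) (j := n) ⟨le_rfl, by omega⟩ ⟨by omega, le_rfl⟩
  have := h.2.2.1.mul_mem (i := 1) (j := n) ⟨le_rfl, by omega⟩ ⟨by omega, le_rfl⟩
  omega

lemma ttEquiv_of_signRev {A' B' C' D' : BSeq} (hA : SignRev n A A') (hB : SignRev n B B')
    (hC : SignRev n C C') (hD : SignRev (n - 1) D D') :
    TTEquiv n (A, B, C, D) (A', B', C', D') := by
  have stepA : TTEquiv n (A, B, C, D) (A', B, C, D) := by
    cases hA
    exacts [.refl, .single (.negA ..), .single (.revA ..), .tail (.single (.revA ..)) (.negA ..)]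
  have stepB : TTEquiv n (A', B, C, D) (A', B', C, D) := by
    cases hB
    exacts [.refl, .single (.negB ..), .single (.revB ..), .tail (.single (.revB ..)) (.negB ..)]
  have stepC : TTEquiv n (A', B', C, D) (A', B', C', D) := by
    cases hC
    exacts [.refl, .single (.negC ..), .single (.revC ..), .tail (.single (.revC ..)) (.negC ..)]
  have stepD : TTEquiv n (A', B', C', D) (A', B', C', D') := by
    cases hD
    exacts [.refl, .single (.negD ..), .single (.revD ..), .tail (.single (.revD ..)) (.negD ..)]
  exact stepA.trans (stepB.trans (stepC.trans stepD))

lemma exists_ttEquiv_mul_ends_eq_one (hn : 1 ≤ n) (hev : Even n) (h : IsTT n A B C D) :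
    ∃ X : SeqQuad, TTEquiv n (A, B, C, D) X ∧ IsTT n X.1 X.2.1 X.2.2.1 X.2.2.2 ∧
      X.1 1 * X.1 n = 1 := by
  by_cases hA : A 1 * A n = 1
  · exact ⟨_, .refl, h, hA⟩
  · have hA' :=
      (h.1.mul_mem (i := 1) (j := n) ⟨le_rfl, by omega⟩ ⟨by omega, le_rfl⟩).resolve_left hA
    exact ⟨_, .single (.alt A B C D), h.of_elemStep (.alt A B C D),
      by rw [altSeq_mul_ends hev, hA', neg_neg]⟩

lemma exists_isNormalized (hn : 2 ≤ n) (hev : Even n) (h : IsTT n A B C D) :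
    ∃ A' B' C' D', TTEquiv n (A, B, C, D) (A', B', C', D') ∧ IsNormalized n A' B' C' D' := by
  obtain ⟨⟨A₁, B₁, C₁, D₁⟩, hX, hXTT, hA₁⟩ := exists_ttEquiv_mul_ends_eq_one (by omega) hev h
  obtain ⟨hB₁, hC₁⟩ := hXTT.mul_ends hn hA₁
  obtain ⟨A', sA, hA'1, hA'n, hA'⟩ := exists_signRev_asymAt hXTT.1 (by omega) hA₁
  obtain ⟨B', sB, hB'1, hB'n, hB'⟩ := exists_signRev_asymAt hXTT.2.1 (by omega) hB₁
  obtain ⟨C', sC, hC'1, hC'⟩ := exists_signRev_symAt hXTT.2.2.1 (by omega) hC₁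
  obtain ⟨D', sD, hD'1, hD'⟩ := exists_signRev_defectAt hXTT.2.2.2.1 hn
  exact ⟨A', B', C', D', hX.trans (ttEquiv_of_signRev sA sB sC sD),
    hA'1, hA'n, hB'1, hB'n, hC'1, hD'1, hA', hB', hC', hD'⟩

lemma IsTT.last_C_eq_neg_one (h : IsTT n A B C D) (hn : 2 ≤ n)
    (hN : IsNormalized n A B C D) : C n = -1 := by
  obtain ⟨hA1, hAn, -, -, hC1, -⟩ := hN
  simpa [hC1] using (h.mul_ends hn (by rw [hA1, hAn, one_mul])).2

lemma abOrdered_or_swap_of_asymAt_two (hn : 2 < n) (hAb : IsBinarySeq n A)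
    (hBb : IsBinarySeq n B) (hA : PosAtFirst n (AsymAt n A) A) (hA1 : A 1 = 1) (hAn : A n = 1)
    (hA2 : A 2 ≠ A (n - 1)) (hB2 : B 2 = B (n - 1)) : ABOrdered n A B ∨ ABOrdered n B A := by
  have hA2' : A 2 = 1 := by
    refine hA 2 (by norm_num) (by omega) (by rwa [AsymAt, show (n : ℤ) + 1 - 2 = n - 1 by ring])
      fun j hj hj2 => ?_
    obtain rfl : j = 1 := by omega
    simp [AsymAt, hA1, hAn]
  have hAn1 : A (n - 1) = -1 := by
    have := hAb.1 (n - 1) (by omega) (by omega); rw [hA2'] at hA2; omega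
  rcases hBb.1 2 (by norm_num) (by omega) with hB2' | hB2'
  · exact .inr ⟨fun _ h => absurd (hB2'.trans hA2'.symm) h, fun _ _ => ⟨hB2 ▸ hB2', hAn1⟩⟩
  · exact .inl ⟨fun _ _ => hA2', fun _ h => by rw [hA2', hB2'] at h; norm_num at h⟩

lemma IsNormalized.abOrdered_or_swap (hN : IsNormalized n A B C D) (h : IsTT n A B C D)
    (hn : 2 < n) : ABOrdered n A B ∨ ABOrdered n B A := by
  have hCn := h.last_C_eq_neg_one hn.le hN
  obtain ⟨hA1, hAn, hB1, hBn, hC1, hD1, hA, hB, -, -⟩ := hN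
  have hid := h.identity_at_sub_two hn
  obtain ⟨hAb, hBb, hCb, hDb, -⟩ := h
  rw [hA1, hAn, hB1, hBn, hC1, hCn, hD1] at hid
  have := hAb.1 2 (by norm_num) (by omega)
  have := hAb.1 (n - 1) (by omega) (by omega)
  have := hBb.1 2 (by norm_num) (by omega)
  have := hBb.1 (n - 1) (by omega) (by omega)
  have := hCb.1 2 (by norm_num) (by omega)
  have := hCb.1 (n - 1) (by omega) (by omega)
  have := hDb.1 (n - 1) (by omega) (by omega)
  -- modulo 4 the identity reads `(a₂ + a_{n-1}) + (b₂ + b_{n-1}) ≡ 2`, so exactly one vanishes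
  by_cases hA2 : A 2 = A (n - 1)
  · exact (abOrdered_or_swap_of_asymAt_two hn hBb hAb hB hB1 hBn (by omega) hA2).symm
  · exact abOrdered_or_swap_of_asymAt_two hn hAb hBb hA hA1 hAn hA2 (by omega)

theorem exists_isCanonical (hn : 2 ≤ n) (hev : Even n) (h : IsTT n A B C D) :
    ∃ T : SeqQuad, TTEquiv n (A, B, C, D) T ∧ IsCanonical n T.1 T.2.1 T.2.2.1 T.2.2.2 := by
  obtain ⟨A', B', C', D', hX, hN⟩ := exists_isNormalized hn hev h
  by_cases h2 : 2 < n
  · rcases hN.abOrdered_or_swap (h.of_ttEquiv hX) h2 with hord | hord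
    · exact ⟨_, hX, (isCanonical_iff hn).2 ⟨hN, hord⟩⟩
    · exact ⟨(B', A', C', D'), hX.tail (.swap ..), (isCanonical_iff hn).2 ⟨hN.swap, hord⟩⟩
  · exact ⟨_, hX, (isCanonical_iff hn).2 ⟨hN, fun h => absurd h h2, fun h => absurd h h2⟩⟩

end Existence

def altQuad (X : SeqQuad) : SeqQuad :=
  (altSeq X.1, altSeq X.2.1, altSeq X.2.2.1, altSeq X.2.2.2)

def swapAB (X : SeqQuad) : SeqQuad := (X.2.1, X.1, X.2.2)

def QuadSignRev (n : ℕ) (X Y : SeqQuad) : Prop :=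
  SignRev n X.1 Y.1 ∧ SignRev n X.2.1 Y.2.1 ∧ SignRev n X.2.2.1 Y.2.2.1 ∧
    SignRev (n - 1) X.2.2.2 Y.2.2.2

@[simp] lemma altQuad_altQuad (X : SeqQuad) : altQuad (altQuad X) = X := by
  simp [altQuad]

@[simp] lemma swapAB_swapAB (X : SeqQuad) : swapAB (swapAB X) = X := rfl

lemma altQuad_swapAB (X : SeqQuad) : altQuad (swapAB X) = swapAB (altQuad X) := rfl

lemma exists_quadSignRev_of_ttEquiv {n : ℕ} {X Y : SeqQuad} (h : TTEquiv n X Y) :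
    ∃ P, (P = X ∨ P = altQuad X ∨ P = swapAB X ∨ P = swapAB (altQuad X)) ∧
      QuadSignRev n P Y := by
  induction h with
  | refl => exact ⟨X, .inl rfl, .refl, .refl, .refl, .refl⟩
  | tail _ hs ih =>
    obtain ⟨P, hP, sA, sB, sC, sD⟩ := ih
    cases hs with
    | negA => exact ⟨P, hP, sA.negSeq, sB, sC, sD⟩
    | negB => exact ⟨P, hP, sA, sB.negSeq, sC, sD⟩
    | negC => exact ⟨P, hP, sA, sB, sC.negSeq, sD⟩
    | negD => exact ⟨P, hP, sA, sB, sC, sD.negSeq⟩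
    | revA => exact ⟨P, hP, sA.revSeq, sB, sC, sD⟩
    | revB => exact ⟨P, hP, sA, sB.revSeq, sC, sD⟩
    | revC => exact ⟨P, hP, sA, sB, sC.revSeq, sD⟩
    | revD => exact ⟨P, hP, sA, sB, sC, sD.revSeq⟩
    | alt =>
      refine ⟨altQuad P, ?_, sA.altSeq, sB.altSeq, sC.altSeq, sD.altSeq⟩
      rcases hP with rfl | rfl | rfl | rfl <;> simp [altQuad_swapAB]
    | swap =>
      refine ⟨swapAB P, ?_, sB, sA, sC, sD⟩
      rcases hP with rfl | rfl | rfl | rfl <;> simp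

namespace SignRev

variable {n : ℕ} {s t : BSeq}

lemma eq_of_asymAt (h : SignRev n s t) (hs : IsBinarySeq n s) (hs1 : s 1 = 1) (hsn : s n = 1)
    (hsP : PosAtFirst n (AsymAt n s) s) (ht1 : t 1 = 1) (htP : PosAtFirst n (AsymAt n t) t) :
    t = s := by
  cases h with
  | refl => rfl
  | neg => simp [_root_.negSeq, hs1] at ht1
  | rev =>
    rw [asymAt_revSeq] at htP
    have hsym := hsP.not_of_neg htP fun i h1 h2 hi => revSeq_eq_neg_of_asymAt hs h1 h2 hi
    exact hs.revSeq.ext hs fun i h1 h2 => by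
      simpa [AsymAt, _root_.revSeq, eq_comm] using hsym i h1 h2
  | negRev => simp [_root_.negSeq, _root_.revSeq, hsn] at ht1

lemma eq_of_symAt (h : SignRev n s t) (hs : IsBinarySeq n s) (hs1 : s 1 = 1) (hsn : s n = -1)
    (hsP : PosAtFirst n (SymAt n s) s) (ht1 : t 1 = 1) (htP : PosAtFirst n (SymAt n t) t) :
    t = s := by
  cases h with
  | refl => rfl
  | neg => simp [_root_.negSeq, hs1] at ht1
  | rev => simp [_root_.revSeq, hsn] at ht1
  | negRev =>
    rw [symAt_negSeq_revSeq] at htP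
    have hasym := hsP.not_of_neg htP fun i _ _ hi => negSeq_revSeq_eq_neg_of_symAt hi
    refine hs.revSeq.negSeq.ext hs fun i h1 h2 => ?_
    rw [← neg_neg (s i), ← hs.eq_neg_of_ne ⟨h1, h2⟩ ⟨by omega, by omega⟩ (hasym i h1 h2)]
    rfl

lemma eq_of_defectAt (h : SignRev (n - 1) s t) (hn : 2 ≤ n) (hev : Even n)
    (hs : IsBinarySeq (n - 1) s) (hs1 : s 1 = 1) (hsP : PosAtFirst (n - 1) (DefectAt n s) s)
    (ht1 : t 1 = 1) (htP : PosAtFirst (n - 1) (DefectAt n t) t) : t = s := by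
  have hrev := revSeq_sub_one_apply (by omega : 1 ≤ n) s
  have hbin : ∀ i : ℤ, 1 ≤ i → i ≤ n - 1 → s i = 1 ∨ s i = -1 := fun i h1 h2 =>
    hs.1 i h1 (by omega)
  cases h with
  | refl => rfl
  | neg => simp [_root_.negSeq, hs1] at ht1
  | rev =>
    have hlast : s (n - 1) = 1 := by simpa [hrev] using ht1
    rw [defectAt_revSeq (by omega) hs1 hlast] at htP
    have hnd := hsP.not_of_neg htP fun i h1 h2 hi => by
      simp [hrev, hs.eq_of_defectAt h1 h2 hi, hlast]
    refine hs.revSeq.ext hs fun i h1 h2 => ?_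
    have := eq_of_mul_eq (hbin i h1 (by omega)) (not_not.1 (hnd i h1 (by omega)))
    rw [hrev, this, hlast, one_mul]
  | negRev =>
    have hlast : s (n - 1) = -1 := by
      simp only [_root_.negSeq, hrev] at ht1; omega
    rw [defectAt_negSeq_revSeq (by omega) hs1 hlast] at htP
    have hnd := hsP.not_of_neg htP fun i h1 h2 hi => by
      simp [_root_.negSeq, hrev, hs.eq_of_defectAt h1 h2 hi, hlast]
    -- no defect at all would give `s k * s k = s (n - 1) = -1` at the middle index `k = n / 2`
    obtain ⟨k, rfl⟩ := hev
    have hk := hbin k (by omega) (by omega)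
    have := eq_of_mul_eq hk (not_not.1 (hnd k (by omega) (by omega)))
    rw [show ((k + k : ℕ) : ℤ) - k = k by push_cast; ring, hlast] at this
    omega

end SignRev

section Uniqueness

variable {n : ℕ} {A B C D : BSeq}

lemma eq_of_abOrdered_of_abOrdered (hAb : IsBinarySeq n A) (hBb : IsBinarySeq n B)
    (hA1 : A 1 = 1) (hAn : A n = 1) (hB1 : B 1 = 1) (hBn : B n = 1) (h : ABOrdered n A B)
    (h' : ABOrdered n B A) : A = B := by
  by_cases h2 : 2 < n
  · exfalso
    by_cases hAB : A 2 = B 2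
    · have := (h.2 h2 hAB).2
      have := (h'.2 h2 hAB.symm).1
      omega
    · exact hAB ((h.1 h2 hAB).trans (h'.1 h2 (Ne.symm hAB)).symm)
  · refine hAb.ext hBb fun i h1 hi => ?_
    obtain rfl | rfl : i = 1 ∨ i = n := by omega
    exacts [hA1.trans hB1.symm, hAn.trans hBn.symm]

theorem IsCanonical.eq_of_ttEquiv (hn : 2 ≤ n) (hev : Even n) {A' B' C' D' : BSeq}
    (hTT : IsTT n A B C D) (hc : IsCanonical n A B C D) (hc' : IsCanonical n A' B' C' D')
    (h : TTEquiv n (A, B, C, D) (A', B', C', D')) : (A', B', C', D') = (A, B, C, D) := by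
  rw [isCanonical_iff hn] at hc hc'
  obtain ⟨hN, hord⟩ := hc
  have hCn := hTT.last_C_eq_neg_one hn hN
  obtain ⟨hA1, hAn, hB1, hBn, hC1, hD1, hA, hB, hC, hD⟩ := hN
  obtain ⟨⟨hA1', hAn', hB1', hBn', hC1', hD1', hA', hB', hC', hD'⟩, hord'⟩ := hc'
  obtain ⟨hAb, hBb, hCb, hDb, -⟩ := hTT
  have hends : ∀ s : BSeq, s 1 = 1 → s n = 1 → SignRev n (altSeq s) A' → False :=
    fun s hs1 hsn hs => by simpa [altSeq_mul_ends hev, hs1, hsn, hA1', hAn'] using hs.mul_ends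
  obtain ⟨P, hP, sA, sB, sC, sD⟩ := exists_quadSignRev_of_ttEquiv h
  rcases hP with rfl | rfl | rfl | rfl <;> dsimp only [swapAB, altQuad] at sA sB sC sD
  · rw [sA.eq_of_asymAt hAb hA1 hAn hA hA1' hA', sB.eq_of_asymAt hBb hB1 hBn hB hB1' hB',
      sC.eq_of_symAt hCb hC1 hCn hC hC1' hC', sD.eq_of_defectAt hn hev hDb hD1 hD hD1' hD']
  · exact (hends A hA1 hAn sA).elim
  · obtain rfl := sA.eq_of_asymAt hBb hB1 hBn hB hA1' hA'
    obtain rfl := sB.eq_of_asymAt hAb hA1 hAn hA hB1' hB'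
    rw [eq_of_abOrdered_of_abOrdered hAb hBb hA1 hAn hB1 hBn hord hord',
      sC.eq_of_symAt hCb hC1 hCn hC hC1' hC', sD.eq_of_defectAt hn hev hDb hD1 hD hD1' hD']
  · exact (hends B hB1 hBn sA).elim

end Uniqueness

/-- For every even `n`, each equivalence class of Turyn-type sequences `TT(n)`
contains exactly one member in canonical form. -/
theorem unique_canonical_member (n : ℕ) (hn : 1 ≤ n) (hev : Even n) (A B C D : BSeq)
    (h : IsTT n A B C D) :
    ∃! T : SeqQuad, TTEquiv n (A, B, C, D) T ∧
      IsCanonical n T.1 T.2.1 T.2.2.1 T.2.2.2 := by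
  have hn2 : 2 ≤ n := by obtain ⟨k, rfl⟩ := hev; omega
  obtain ⟨⟨A', B', C', D'⟩, hT, hTc⟩ := exists_isCanonical hn2 hev h
  refine ⟨(A', B', C', D'), ⟨hT, hTc⟩, fun ⟨A'', B'', C'', D''⟩ ⟨hY, hYc⟩ => ?_⟩
  exact hTc.eq_of_ttEquiv hn2 hev (h.of_ttEquiv hT) hYc (hT.symm.trans hY)
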